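/- arXiv:2110.10657 — 8 statements merged into one kernel-verified Lean document; each statement's English description precedes it below -/
import Mathlib

section
/- Let A be a subset of the nonnegative orthant of R^∞ (the space of finitely supported real sequences), and let C be the cone generated by the orbit Sym(∞)(A) of A under the group of finitary permutations of ℕ. Then every element u ∈ C with support size s = |supp(u)| can be written as a conical (nonnegative real) combination of at most s elements of Sym(∞)(A). -/
/-- Action of a permutation of `ℕ` on real sequences: `(σ • u) i = u (σ⁻¹ i)`. -/
def permAct (σ : Equiv.Perm ℕ) (u : ℕ → ℝ) : ℕ → ℝ := fun i => u (σ.symm i)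

/-- A permutation of `ℕ` is finitary if it moves only finitely many elements. -/
def IsFinitary (σ : Equiv.Perm ℕ) : Prop := {i | σ i ≠ i}.Finite

/-- The `Sym(∞)`-orbit of a set of sequences. -/
def symOrbit (A : Set (ℕ → ℝ)) : Set (ℕ → ℝ) :=
  {v | ∃ σ : Equiv.Perm ℕ, IsFinitary σ ∧ ∃ u ∈ A, v = permAct σ u}

/-- Membership in the cone generated by `B`: finite nonnegative real combinations. -/
def inCone (B : Set (ℕ → ℝ)) (u : ℕ → ℝ) : Prop :=
  ∃ (k : ℕ) (c : Fin k → ℝ) (b : Fin k → ℕ → ℝ),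
    (∀ i, 0 ≤ c i) ∧ (∀ i, b i ∈ B) ∧ u = ∑ i, c i • b i

/-- Conic Carathéodory reduction step, by strong induction on the number of nonzero
coefficients: one can always reduce to at most `S.card` nonzero coefficients. -/
lemma cone_reduce (S : Finset ℕ) (k : ℕ) (b : Fin k → ℕ → ℝ) :
    ∀ (n : ℕ) (c : Fin k → ℝ),
      (Finset.univ.filter (fun i => c i ≠ 0)).card = n →
      (∀ i, 0 ≤ c i) →
      (∀ i, c i ≠ 0 → ∀ j ∉ S, b i j = 0) →
      ∃ c' : Fin k → ℝ, (∀ i, 0 ≤ c' i) ∧ (∀ i, c' i ≠ 0 → c i ≠ 0) ∧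
        (Finset.univ.filter (fun i => c' i ≠ 0)).card ≤ S.card ∧
        ∑ i, c' i • b i = ∑ i, c i • b i := by
  intro n
  induction n using Nat.strong_induction_on with
  | _ n ih =>
    intro c hn hc hb
    by_cases hns : n ≤ S.card
    · exact ⟨c, hc, fun i h => h, hn ▸ hns, rfl⟩
    push_neg at hns
    -- the `> S.card` vectors `b i` (for `c i ≠ 0`) are supported in `S`, hence dependent
    set ι := {i : Fin k // c i ≠ 0} with hι
    have hcard : Fintype.card ι = n := by
      rw [← hn]; exact Fintype.card_subtype _
    have hdep : ¬ LinearIndependent ℝ (fun i : ι => (fun j : S => b i.1 j.1)) := by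
      intro hli
      have := hli.fintype_card_le_finrank
      rw [hcard, Module.finrank_pi, Fintype.card_coe] at this
      omega
    obtain ⟨g, hgsum, i₁, hgi₁⟩ := Fintype.not_linearIndependent_iff.mp hdep
    -- extend `g` to all of `Fin k`
    set d0 : Fin k → ℝ := fun i => if h : c i ≠ 0 then g ⟨i, h⟩ else 0 with hd0
    have hd0supp : ∀ i, d0 i ≠ 0 → c i ≠ 0 := by
      intro i h
      by_contra hci
      simp [hd0, hci] at h
    have hd0sum : ∑ i, d0 i • b i = 0 := by
      funext j
      rw [Finset.sum_apply]
      by_cases hj : j ∈ S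
      · have := congrFun hgsum ⟨j, hj⟩
        rw [Finset.sum_apply] at this
        simp only [Pi.smul_apply, smul_eq_mul, Pi.zero_apply] at this ⊢
        rw [← this]
        calc ∑ x : Fin k, d0 x * b x j
            = ∑ x ∈ Finset.univ.filter (fun i => c i ≠ 0), d0 x * b x j :=
              (Finset.sum_filter_of_ne
                (fun x _ hx => hd0supp x (left_ne_zero_of_mul hx))).symm
          _ = ∑ x : ι, d0 x.1 * b x.1 j :=
              Finset.sum_subtype _ (fun x => by simp) (fun i => d0 i * b i j)
          _ = ∑ x : ι, g x * b x.1 j := by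
              apply Finset.sum_congr rfl
              intro x _
              simp [hd0, x.2]
      · apply Finset.sum_eq_zero
        intro i _
        by_cases hdi : d0 i = 0
        · simp [hdi]
        · simp [hb i (hd0supp i hdi) j hj]
    have hd0ne : ∃ i, d0 i ≠ 0 := ⟨i₁.1, by simpa [hd0, i₁.2] using hgi₁⟩
    -- arrange a positive coordinate
    obtain ⟨d, hdsupp, hdsum, i₂, hdi₂⟩ :
        ∃ d : Fin k → ℝ, (∀ i, d i ≠ 0 → c i ≠ 0) ∧ (∑ i, d i • b i = 0) ∧ ∃ i, 0 < d i := by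
      obtain ⟨i₀, hi₀⟩ := hd0ne
      rcases hi₀.lt_or_gt with hneg | hpos
      · refine ⟨-d0, fun i h => hd0supp i (by simpa using h), ?_, i₀, by simpa using hneg⟩
        simp only [Pi.neg_apply, neg_smul, Finset.sum_neg_distrib, hd0sum, neg_zero]
      · exact ⟨d0, hd0supp, hd0sum, i₀, hpos⟩
    -- choose the minimizing ratio
    have hPne : (Finset.univ.filter (fun i => 0 < d i)).Nonempty :=
      ⟨i₂, by simp [hdi₂]⟩
    obtain ⟨i₀, hi₀mem, hi₀min⟩ :=
      Finset.exists_min_image (Finset.univ.filter (fun i => 0 < d i)) (fun i => c i / d i) hPne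
    have hdi₀ : 0 < d i₀ := by simpa using hi₀mem
    set t : ℝ := c i₀ / d i₀ with ht
    have ht0 : 0 ≤ t := div_nonneg (hc i₀) hdi₀.le
    set c' : Fin k → ℝ := fun i => c i - t * d i with hc'
    have hc'0 : ∀ i, 0 ≤ c' i := by
      intro i
      by_cases hdi : 0 < d i
      · have : t ≤ c i / d i := hi₀min i (by simp [hdi])
        rw [le_div_iff₀ hdi] at this
        simp [hc', sub_nonneg, this]
      · push_neg at hdi
        have : t * d i ≤ 0 := mul_nonpos_of_nonneg_of_nonpos ht0 hdi
        simp only [hc']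
        linarith [hc i]
    have hc'supp : ∀ i, c' i ≠ 0 → c i ≠ 0 := by
      intro i h
      by_contra hci
      have hdi : d i = 0 := by
        by_contra hdi; exact (hdsupp i hdi) hci
      simp [hc', hci, hdi] at h
    have hc'i₀ : c' i₀ = 0 := by
      simp [hc', ht, div_mul_cancel₀ _ hdi₀.ne']
    have hc'sum : ∑ i, c' i • b i = ∑ i, c i • b i := by
      simp only [hc', sub_smul, mul_smul]
      rw [Finset.sum_sub_distrib, ← Finset.smul_sum, hdsum, smul_zero, sub_zero]
    have hci₀ : c i₀ ≠ 0 := hdsupp i₀ hdi₀.ne'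
    have hssub : (Finset.univ.filter (fun i => c' i ≠ 0)) ⊂
        (Finset.univ.filter (fun i => c i ≠ 0)) := by
      constructor
      · intro i hi
        simp only [Finset.mem_filter, Finset.mem_univ, true_and] at hi ⊢
        exact hc'supp i hi
      · intro hsub
        have := hsub (by simp [hci₀] : i₀ ∈ Finset.univ.filter (fun i => c i ≠ 0))
        simp [hc'i₀] at this
    have hlt : (Finset.univ.filter (fun i => c' i ≠ 0)).card < n :=
      hn ▸ Finset.card_lt_card hssub
    obtain ⟨c'', h1, h2, h3, h4⟩ := ih _ hlt c' rfl hc'0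
      (fun i hi j hj => hb i (hc'supp i hi) j hj)
    exact ⟨c'', h1, fun i h => hc'supp i (h2 i h), h3, h4.trans hc'sum⟩

/-- Equivariant Carathéodory: if `A` lies in the nonnegative orthant of `R^∞`, every
`u` in the cone generated by the `Sym(∞)`-orbit of `A` is a nonnegative combination of at
most `|supp u|` elements of the orbit. -/
theorem equivariant_caratheodory
    (A : Set (ℕ → ℝ))
    (hA : ∀ a ∈ A, (∀ i, 0 ≤ a i) ∧ {i | a i ≠ 0}.Finite)
    (u : ℕ → ℝ) (hu : inCone (symOrbit A) u)
    (hs : {i | u i ≠ 0}.Finite) :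
    ∃ k ≤ hs.toFinset.card, ∃ (c : Fin k → ℝ) (b : Fin k → ℕ → ℝ),
      (∀ i, 0 ≤ c i) ∧ (∀ i, b i ∈ symOrbit A) ∧ u = ∑ i, c i • b i := by
  obtain ⟨k, c, b, hc, hbm, hsum⟩ := hu
  set S := hs.toFinset with hS
  -- nonnegativity of orbit elements
  have hbpos : ∀ i j, 0 ≤ b i j := by
    intro i j
    obtain ⟨σ, -, a, ha, hv⟩ := hbm i
    rw [hv]
    exact (hA a ha).1 _
  -- support containment
  have hb : ∀ i, c i ≠ 0 → ∀ j ∉ S, b i j = 0 := by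
    intro i hci j hj
    have huj : u j = 0 := by
      by_contra h
      exact hj (by simp [hS, h])
    have hsum' : ∑ i, c i * b i j = 0 := by
      have h := congrFun hsum j
      rw [Finset.sum_apply] at h
      simp only [Pi.smul_apply, smul_eq_mul] at h
      exact h.symm.trans huj
    have : ∀ i ∈ Finset.univ, c i * b i j = 0 := by
      rw [← Finset.sum_eq_zero_iff_of_nonneg
        (fun i _ => mul_nonneg (hc i) (hbpos i j))]
      exact hsum'
    rcases mul_eq_zero.mp (this i (Finset.mem_univ i)) with h | h
    · exact absurd h hci
    · exact h
  obtain ⟨c', hc'0, hc'supp, hc'card, hc'sum⟩ :=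
    cone_reduce S k b _ c rfl hc hb
  set T := Finset.univ.filter (fun i => c' i ≠ 0) with hT
  refine ⟨T.card, hc'card, fun j => c' ((T.equivFin.symm j).1),
    fun j => b ((T.equivFin.symm j).1), fun j => hc'0 _, fun j => hbm _, ?_⟩
  have h1 : ∑ j : Fin T.card, c' ((T.equivFin.symm j).1) • b ((T.equivFin.symm j).1)
      = ∑ x : T, c' x.1 • b x.1 :=
    Fintype.sum_equiv T.equivFin.symm _ _ (fun j => rfl)
  rw [h1, Finset.sum_coe_sort T (fun i => c' i • b i)]
  rw [hsum, ← hc'sum]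
  symm
  apply Finset.sum_subset (Finset.filter_subset _ _)
  intro i _ hi
  have : c' i = 0 := by
    by_contra h
    exact hi (by simp [hT, h])
  simp [this]
end

section
/- Let C ⊆ R^∞ be a cone invariant under Sym(∞) (finitary permutations of ℕ). Then its dual cone C* = {u ∈ R^ℕ : ⟨u,v⟩ ≥ 0 for all v ∈ C} is invariant under the full symmetric group Sym(ℕ) acting on R^ℕ. -/
lemma isFinitary_swap (a b : ℕ) : IsFinitary (Equiv.swap a b) := by
  apply Set.Finite.subset (Set.toFinite {a, b})
  intro i hi
  by_contra hc
  simp only [Set.mem_insert_iff, Set.mem_singleton_iff, not_or] at hc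
  exact hi (Equiv.swap_apply_of_ne_of_ne hc.1 hc.2)

lemma isFinitary_mul {σ τ : Equiv.Perm ℕ} (hσ : IsFinitary σ) (hτ : IsFinitary τ) :
    IsFinitary (σ * τ) := by
  apply Set.Finite.subset (hσ.union hτ)
  intro i hi
  by_contra hc
  simp only [Set.mem_union, Set.mem_setOf_eq, not_or, not_not] at hc
  exact hi (by simp [Equiv.Perm.mul_apply, hc.2, hc.1])

/-- Any permutation agrees on a finite set with some finitary permutation. -/
lemma exists_finitary_agree (π : Equiv.Perm ℕ) (S : Finset ℕ) :
    ∃ τ : Equiv.Perm ℕ, IsFinitary τ ∧ ∀ j ∈ S, τ j = π j := by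
  classical
  induction S using Finset.induction_on with
  | empty => exact ⟨1, by simp [IsFinitary], by simp⟩
  | @insert a S ha IH =>
    obtain ⟨τ₀, hτ₀fin, hτ₀⟩ := IH
    refine ⟨Equiv.swap (π a) (τ₀ a) * τ₀, isFinitary_mul (isFinitary_swap _ _) hτ₀fin, ?_⟩
    intro j hj
    rcases Finset.mem_insert.mp hj with rfl | hjS
    · simp [Equiv.Perm.mul_apply, Equiv.swap_apply_right]
    · have hja : j ≠ a := fun h => ha (h ▸ hjS)
      have h1 : τ₀ j = π j := hτ₀ j hjS
      have h2 : π j ≠ π a := fun h => hja (π.injective h)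
      have h3 : π j ≠ τ₀ a := by
        intro h
        exact hja (τ₀.injective (h1.trans h))
      simp [Equiv.Perm.mul_apply, h1, Equiv.swap_apply_of_ne_of_ne h2 h3]

/-- The dual cone of a `Sym(∞)`-invariant cone `C ⊆ R^∞` is invariant under the full
symmetric group `Sym(ℕ)` acting on `R^ℕ`. -/
theorem dual_cone_full_sym_invariant
    (C : Set (ℕ → ℝ))
    (hfin : ∀ v ∈ C, {i | v i ≠ 0}.Finite)
    (hadd : ∀ v ∈ C, ∀ w ∈ C, v + w ∈ C)
    (hsmul : ∀ r : ℝ, 0 ≤ r → ∀ v ∈ C, r • v ∈ C)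
    (hinv : ∀ σ : Equiv.Perm ℕ, IsFinitary σ → ∀ v ∈ C, permAct σ v ∈ C)
    (u : ℕ → ℝ) (hu : ∀ v ∈ C, 0 ≤ ∑ᶠ i, u i * v i)
    (σ : Equiv.Perm ℕ) :
    ∀ v ∈ C, 0 ≤ ∑ᶠ i, permAct σ u i * v i := by
  classical
  intro v hv
  obtain ⟨τ, hτfin, hτ⟩ := exists_finitary_agree σ.symm (hfin v hv).toFinset
  have hτv : ∀ j, v j ≠ 0 → τ j = σ.symm j := fun j hj =>
    hτ j ((hfin v hv).mem_toFinset.mpr hj)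
  have hmem : permAct τ v ∈ C := hinv τ hτfin v hv
  have h0 : 0 ≤ ∑ᶠ i, u i * permAct τ v i := hu _ hmem
  have hc : (∑ᶠ i, u i * permAct τ v i) = ∑ᶠ i, permAct σ u i * v i := by
    have := finsum_comp (g := fun i => u i * permAct τ v i) (e := fun j => τ j) τ.bijective
    rw [← this]
    apply finsum_congr
    intro j
    simp only [permAct, Equiv.symm_apply_apply]
    by_cases hj : v j = 0
    · simp [hj]
    · rw [hτv j hj]
  rwa [hc] at h0
end

section
/- Let M ⊆ Z^n be a Sym(n)-invariant normal monoid. If u = (u_1,…,u_n) ∈ M and v_{n-1}, v_n are integers lying between u_{n-1} and u_n with v_{n-1} + v_n = u_{n-1} + u_n, then (u_1,…,u_{n-2}, v_{n-1}, v_n) ∈ M. -/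
private lemma nsmul_mem' {n : ℕ} {M : Set (Fin n → ℤ)}
    (hzero : (0 : Fin n → ℤ) ∈ M)
    (hadd : ∀ x ∈ M, ∀ y ∈ M, x + y ∈ M) :
    ∀ (m : ℕ), ∀ x ∈ M, (m : ℤ) • x ∈ M := by
  intro m
  induction m with
  | zero => intro x hx; simpa using hzero
  | succ k ih =>
      intro x hx
      have h := hadd _ (ih x hx) x hx
      convert h using 1
      push_cast
      module

private lemma aux_between {n : ℕ} {M : Set (Fin n → ℤ)}
    (hzero : (0 : Fin n → ℤ) ∈ M)
    (hadd : ∀ x ∈ M, ∀ y ∈ M, x + y ∈ M)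
    (hnormal : ∀ (u : Fin n → ℤ) (k : ℕ), 0 < k → (k : ℤ) • u ∈ M → u ∈ M)
    (u : Fin n → ℤ) (hu : u ∈ M)
    (u' : Fin n → ℤ) (hu' : u' ∈ M)
    (p q : Fin n) (hpq : p ≠ q)
    (hp' : u' p = u q) (hq' : u' q = u p)
    (hother : ∀ i, i ≠ p → i ≠ q → u' i = u i)
    (v w : ℤ) (hv1 : u p ≤ v) (hv2 : v ≤ u q)
    (hsum : v + w = u p + u q) :
    Function.update (Function.update u p v) q w ∈ M := by
  rcases eq_or_lt_of_le (le_trans hv1 hv2) with hab | hab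
  · have hv : v = u p := le_antisymm (hab ▸ hv2) hv1
    have hw : w = u q := by rw [← hab] at hsum ⊢; linarith
    rw [hv, hw, Function.update_eq_self, Function.update_eq_self]; exact hu
  · set a := u p
    set b := u q
    have key : (b - a) • (Function.update (Function.update u p v) q w)
        = (b - v) • u + (v - a) • u' := by
      funext i
      simp only [Pi.add_apply, Pi.smul_apply, smul_eq_mul]
      rcases eq_or_ne i q with rfl | hiq
      · rw [Function.update_self, hq']
        have : w = a + b - v := by linarith
        rw [this]; ring
      rcases eq_or_ne i p with rfl | hip
      · rw [Function.update_of_ne hiq, Function.update_self, hp']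
        ring
      · rw [Function.update_of_ne hiq, Function.update_of_ne hip, hother i hip hiq]
        ring
    have h1 : ((b - v).toNat : ℤ) = b - v := Int.toNat_of_nonneg (by linarith)
    have h2 : ((v - a).toNat : ℤ) = v - a := Int.toNat_of_nonneg (by linarith)
    have h3 : ((b - a).toNat : ℤ) = b - a := Int.toNat_of_nonneg (by linarith)
    have hmem : (b - v) • u + (v - a) • u' ∈ M := by
      have := hadd _ (h1 ▸ nsmul_mem' hzero hadd (b - v).toNat u hu)
        _ (h2 ▸ nsmul_mem' hzero hadd (v - a).toNat u' hu')
      exact this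
    refine hnormal _ (b - a).toNat (by omega) ?_
    rw [h3, key]
    exact hmem

/-- If `M ⊆ ℤⁿ` is a `Sym(n)`-invariant normal monoid, `u ∈ M`, and integers `v, w` lie
between the last two coordinates of `u` with `v + w` equal to their sum, then the vector
obtained from `u` by replacing the last two coordinates by `v, w` is in `M`. -/
theorem between_normal_monoid (n : ℕ) (hn : 2 ≤ n) (M : Set (Fin n → ℤ))
    (hzero : (0 : Fin n → ℤ) ∈ M)
    (hadd : ∀ x ∈ M, ∀ y ∈ M, x + y ∈ M)
    (hnormal : ∀ (u : Fin n → ℤ) (k : ℕ), 0 < k → (k : ℤ) • u ∈ M → u ∈ M)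
    (hinv : ∀ σ : Equiv.Perm (Fin n), ∀ x ∈ M, (fun i => x (σ.symm i)) ∈ M)
    (u : Fin n → ℤ) (hu : u ∈ M)
    (p q : Fin n) (hp : (p : ℕ) = n - 2) (hq : (q : ℕ) = n - 1)
    (v w : ℤ)
    (hv1 : min (u p) (u q) ≤ v) (hv2 : v ≤ max (u p) (u q))
    (hw1 : min (u p) (u q) ≤ w) (hw2 : w ≤ max (u p) (u q))
    (hsum : v + w = u p + u q) :
    Function.update (Function.update u p v) q w ∈ M := by
  have hpq : p ≠ q := by
    intro h
    apply_fun (Fin.val) at h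
    omega
  have hu' : (fun i => u ((Equiv.swap p q) i)) ∈ M := by
    have := hinv (Equiv.swap p q) u hu
    simpa [Equiv.symm_swap] using this
  rcases le_total (u p) (u q) with hab | hab
  · exact aux_between hzero hadd hnormal u hu _ hu' p q hpq
      (by simp) (by simp) (fun i hip hiq => by simp [Equiv.swap_apply_of_ne_of_ne hip hiq])
      v w ((le_min le_rfl hab).trans hv1) (hv2.trans (max_le hab le_rfl)) hsum
  · rw [Function.update_comm hpq]
    exact aux_between hzero hadd hnormal u hu _ hu' q p hpq.symm
      (by simp) (by simp) (fun i hiq hip => by simp [Equiv.swap_apply_of_ne_of_ne hip hiq])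
      w v ((le_min hab le_rfl).trans hw1) (hw2.trans (max_le le_rfl hab)) (by linarith)
end

section
/- Let C ⊆ R^∞ be a Sym(∞)-invariant cone contained in the nonnegative orthant. Then the dual cone C* ⊆ R^ℕ is not Sym(∞)-equivariantly countably generated: for every countable set A ⊆ R^ℕ, the cone generated by the orbit Sym(∞)(A) is a proper subset of C*. -/
/-!
Sym(∞) is countable, so the orbit of a countable set is countable and the cone it generates lies
in a subspace of `ℝ^ℕ` of countable dimension. The dual of a nonnegative cone contains the whole
nonnegative orthant, which spans `ℝ^ℕ`, a space of uncountable dimension.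
-/

open Cardinal Set

def Equiv.Perm.movedGraph (σ : Equiv.Perm ℕ) : Set (ℕ × ℕ) := {p | σ p.1 = p.2 ∧ p.1 ≠ p.2}

lemma Equiv.Perm.movedGraph_injective : Function.Injective Equiv.Perm.movedGraph := by
  intro σ τ h
  have mem_iff (i j : ℕ) : σ i = j ∧ i ≠ j ↔ τ i = j ∧ i ≠ j := Set.ext_iff.mp h (i, j)
  ext i
  by_cases hσ : σ i = i
  · by_cases hτ : τ i = i
    · rw [hσ, hτ]
    · exact ((mem_iff i (τ i)).mpr ⟨rfl, Ne.symm hτ⟩).1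
  · exact ((mem_iff i (σ i)).mp ⟨rfl, Ne.symm hσ⟩).1.symm

lemma IsFinitary.finite_movedGraph {σ : Equiv.Perm ℕ} (hσ : IsFinitary σ) :
    σ.movedGraph.Finite :=
  (hσ.image fun i => (i, σ i)).subset <| by
    rintro ⟨i, j⟩ ⟨hij : σ i = j, hne : i ≠ j⟩
    subst hij
    exact ⟨i, Ne.symm hne, rfl⟩

lemma countable_setOf_isFinitary : {σ : Equiv.Perm ℕ | IsFinitary σ}.Countable :=
  MapsTo.countable_of_injOn (f := Equiv.Perm.movedGraph)
    (fun _ hσ => IsFinitary.finite_movedGraph hσ)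
    Equiv.Perm.movedGraph_injective.injOn Countable.ofPred_finite

lemma Set.Countable.symOrbit {A : Set (ℕ → ℝ)} (hA : A.Countable) : (symOrbit A).Countable := by
  refine ((countable_setOf_isFinitary.prod hA).image fun p => permAct p.1 p.2).mono ?_
  rintro v ⟨σ, hσ, u, hu, rfl⟩
  exact ⟨(σ, u), ⟨hσ, hu⟩, rfl⟩

lemma Submodule.span_setOf_nonneg_eq_top {R M : Type*} [Ring R] [AddCommGroup M] [Lattice M]
    [IsOrderedAddMonoid M] [Module R M] : span R {x : M | 0 ≤ x} = ⊤ :=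
  eq_top_iff'.mpr fun x => posPart_sub_negPart x ▸
    sub_mem (subset_span (posPart_nonneg x)) (subset_span (negPart_nonneg x))

lemma Submodule.span_ne_top_of_countable {K ι : Type*} [Field K] [Uncountable K] [Infinite ι]
    {B : Set (ι → K)} (hB : B.Countable) : span K B ≠ ⊤ := by
  intro htop
  have : Uncountable (ι → K) := Function.const_injective.uncountable
  refine (aleph0_lt_mk (α := ι → K)).not_ge ?_
  calc #(ι → K) = Module.rank K (ι → K) := rank_fun_infinite.symm
    _ = Module.rank K (span K B) := by rw [htop, rank_top]
    _ ≤ #B := rank_span_le B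
    _ ≤ ℵ₀ := hB.le_aleph0

lemma exists_nonneg_notMem_span {K ι : Type*} [Field K] [LinearOrder K] [IsOrderedRing K]
    [Uncountable K] [Infinite ι] {B : Set (ι → K)} (hB : B.Countable) :
    ∃ u : ι → K, 0 ≤ u ∧ u ∉ Submodule.span K B := by
  by_contra! h
  exact Submodule.span_ne_top_of_countable hB <| top_unique <|
    Submodule.span_setOf_nonneg_eq_top (R := K) (M := ι → K) ▸ Submodule.span_le.mpr h

lemma inCone.mem_span {B : Set (ℕ → ℝ)} {u : ℕ → ℝ} (hu : inCone B u) :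
    u ∈ Submodule.span ℝ B := by
  obtain ⟨k, c, b, -, hb, rfl⟩ := hu
  exact Submodule.sum_mem _ fun i _ => Submodule.smul_mem _ _ (Submodule.subset_span (hb i))

theorem dual_not_equivariantly_countably_generated_general
    (C : Set (ℕ → ℝ))
    (hpos : ∀ v ∈ C, ∀ i, 0 ≤ v i)
    (A : Set (ℕ → ℝ)) (hA : A.Countable) :
    ∃ u : ℕ → ℝ, (∀ v ∈ C, 0 ≤ ∑ᶠ i, u i * v i) ∧ ¬ inCone (symOrbit A) u := by
  obtain ⟨u, hu, hspan⟩ := exists_nonneg_notMem_span (K := ℝ) hA.symOrbit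
  exact ⟨u, fun v hv => finsum_nonneg fun i => mul_nonneg (hu i) (hpos v hv i),
    fun hcone => hspan hcone.mem_span⟩

/-- The dual of a nonnegative `Sym(∞)`-invariant cone `C ⊆ R^∞` is not equivariantly
countably generated: any subcone of the dual generated by the `Sym(∞)`-orbit of a
countable set `A` is a proper subset of the dual. -/
theorem dual_not_equivariantly_countably_generated
    (C : Set (ℕ → ℝ))
    (hfin : ∀ v ∈ C, {i | v i ≠ 0}.Finite)
    (hpos : ∀ v ∈ C, ∀ i, 0 ≤ v i)
    (hadd : ∀ v ∈ C, ∀ w ∈ C, v + w ∈ C)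
    (hsmul : ∀ r : ℝ, 0 ≤ r → ∀ v ∈ C, r • v ∈ C)
    (hinv : ∀ σ : Equiv.Perm ℕ, IsFinitary σ → ∀ v ∈ C, permAct σ v ∈ C)
    (A : Set (ℕ → ℝ)) (hA : A.Countable)
    (hsub : ∀ u, inCone (symOrbit A) u → ∀ v ∈ C, 0 ≤ ∑ᶠ i, u i * v i) :
    ∃ u : ℕ → ℝ, (∀ v ∈ C, 0 ≤ ∑ᶠ i, u i * v i) ∧ ¬ inCone (symOrbit A) u :=
  dual_not_equivariantly_countably_generated_general C hpos A hA
end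

section
/- Let C ⊆ R^∞ be the cone generated by the Sym(∞)-orbit of a finite set A contained in the nonnegative orthant. Assume each a ∈ A satisfies supp(a) ⊆ {1,…,|supp(a)|} (i.e., a is supported on an initial segment). Then for every n ≥ 1, C ∩ R^n equals the cone generated by Sym(n)(A ∩ R^n), where R^n is identified with the sequences supported on {1,…,n}. -/
/-- A permutation fixing all indices `≥ n` (an element of `Sym(n)`). -/
def IsSymUpTo (n : ℕ) (σ : Equiv.Perm ℕ) : Prop := ∀ i, n ≤ i → σ i = i

/-- The `Sym(n)`-orbit of a set of sequences. -/
def symNOrbit (n : ℕ) (A : Set (ℕ → ℝ)) : Set (ℕ → ℝ) :=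
  {v | ∃ σ : Equiv.Perm ℕ, IsSymUpTo n σ ∧ ∃ u ∈ A, v = permAct σ u}

/-! A point of `C ∩ ℝⁿ` is a nonnegative combination of translates `σ • a` of nonnegative
vectors, so every translate with a nonzero coefficient vanishes outside `[0, n)` as well.
For such a translate, `a` is supported on `[0, |supp a|)` and `|supp a| = |supp (σ • a)| ≤ n`,
so `a ∈ ℝⁿ` too; then `σ` maps `supp a ⊆ [0, n)` into `[0, n)`, where it agrees with some
`τ ∈ Sym(n)`, and `σ • a = τ • a`. -/

section Cone

variable {B : Set (ℕ → ℝ)}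

lemma inCone_zero : inCone B 0 :=
  ⟨0, Fin.elim0, Fin.elim0, fun i => i.elim0, fun i => i.elim0, by simp⟩

lemma inCone_smul_of_mem {c : ℝ} (hc : 0 ≤ c) {b : ℕ → ℝ} (hb : b ∈ B) : inCone B (c • b) :=
  ⟨1, fun _ => c, fun _ => b, fun _ => hc, fun _ => hb, by simp⟩

lemma inCone_add {u v : ℕ → ℝ} (hu : inCone B u) (hv : inCone B v) : inCone B (u + v) := by
  obtain ⟨k, c, b, hc, hb, rfl⟩ := hu
  obtain ⟨l, d, e, hd, he, rfl⟩ := hv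
  refine ⟨k + l, Fin.append c d, Fin.append b e, Fin.addCases (by simpa) (by simpa),
    Fin.addCases (by simpa) (by simpa), ?_⟩
  simp [Fin.sum_univ_add]

lemma inCone_sum {k : ℕ} {c : Fin k → ℝ} {b : Fin k → ℕ → ℝ} (hc : ∀ i, 0 ≤ c i)
    (hb : ∀ i, c i ≠ 0 → b i ∈ B) : inCone B (∑ i, c i • b i) := by
  refine Finset.sum_induction _ (inCone B) (fun _ _ => inCone_add) inCone_zero fun i _ => ?_
  by_cases hci : c i = 0
  · simpa [hci] using inCone_zero
  · exact inCone_smul_of_mem (hc i) (hb i hci)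

lemma inCone_mono {B' : Set (ℕ → ℝ)} (h : B ⊆ B') {u : ℕ → ℝ} (hu : inCone B u) :
    inCone B' u := by
  obtain ⟨k, c, b, hc, hb, rfl⟩ := hu
  exact ⟨k, c, b, hc, fun i => h (hb i), rfl⟩

lemma inCone.apply_eq_zero {u : ℕ → ℝ} (hu : inCone B u) {j : ℕ} (hB : ∀ b ∈ B, b j = 0) :
    u j = 0 := by
  obtain ⟨k, c, b, -, hb, rfl⟩ := hu
  simp [Finset.sum_apply, hB _ (hb _)]

end Cone

lemma apply_eq_zero_of_sum_smul_apply_eq_zero {k : ℕ} {c : Fin k → ℝ} {b : Fin k → ℕ → ℝ}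
    (hc : ∀ i, 0 ≤ c i) {j : ℕ} (hb : ∀ i, 0 ≤ b i j) (hsum : (∑ i, c i • b i) j = 0)
    {i : Fin k} (hci : c i ≠ 0) : b i j = 0 := by
  rw [Finset.sum_apply] at hsum
  have hterm := (Finset.sum_eq_zero_iff_of_nonneg fun i _ => mul_nonneg (hc i) (hb i)).1
    hsum i (Finset.mem_univ i)
  exact (mul_eq_zero.1 hterm).resolve_left hci

lemma permAct_congr_support {σ τ : Equiv.Perm ℕ} {u : ℕ → ℝ}
    (h : ∀ i, u i ≠ 0 → τ i = σ i) : permAct τ u = permAct σ u := by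
  funext j
  simp only [permAct]
  by_cases hσ : u (σ.symm j) = 0
  · by_cases hτ : u (τ.symm j) = 0
    · rw [hσ, hτ]
    · rw [(Equiv.symm_apply_eq σ).2 (by rw [← h _ hτ, Equiv.apply_symm_apply])]
  · rw [(Equiv.symm_apply_eq τ).2 (by rw [h _ hσ, Equiv.apply_symm_apply])]

section SymUpTo

variable {n : ℕ}

lemma IsSymUpTo.isFinitary {σ : Equiv.Perm ℕ} (hσ : IsSymUpTo n σ) : IsFinitary σ :=
  (Set.finite_Iio n).subset fun i hi => not_le.1 fun hni => hi (hσ i hni)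

lemma IsSymUpTo.permAct_apply_of_le {σ : Equiv.Perm ℕ} (hσ : IsSymUpTo n σ) (u : ℕ → ℝ)
    {j : ℕ} (hj : n ≤ j) : permAct σ u j = u j := by
  rw [permAct, (Equiv.symm_apply_eq σ).2 (hσ j hj).symm]

lemma exists_isSymUpTo_eqOn (σ : Equiv.Perm ℕ) {S : Finset ℕ} (hS : ∀ i ∈ S, i < n ∧ σ i < n) :
    ∃ τ : Equiv.Perm ℕ, IsSymUpTo n τ ∧ ∀ i ∈ S, τ i = σ i := by
  classical
  obtain ⟨g, hg⟩ := Finset.exists_equiv_extend_of_card_eq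
    (α := {i // i ∈ Finset.range n}) (t := Finset.range n)
    (s := S.subtype (· ∈ Finset.range n)) (f := fun i => σ i) (by simp)
    (fun i hi => by
      obtain ⟨i, hiS, rfl⟩ := Finset.mem_image.1 hi
      exact Finset.mem_range.2 (hS i (Finset.mem_subtype.1 hiS)).2)
    (fun i _ j _ hij => Subtype.ext (σ.injective hij))
  refine ⟨Equiv.Perm.ofSubtype g, fun i hi => ?_, fun i hi => ?_⟩
  · exact Equiv.Perm.ofSubtype_apply_of_not_mem g (by simpa using hi)
  · have hin : i ∈ Finset.range n := Finset.mem_range.2 (hS i hi).1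
    rw [Equiv.Perm.ofSubtype_apply_of_mem g hin]
    exact hg ⟨i, hin⟩ (Finset.mem_subtype.2 hi)

lemma exists_isSymUpTo_permAct_eq {σ : Equiv.Perm ℕ} {u : ℕ → ℝ}
    (hu : ∀ i, n ≤ i → u i = 0) (hσu : ∀ i, n ≤ i → permAct σ u i = 0) :
    ∃ τ : Equiv.Perm ℕ, IsSymUpTo n τ ∧ permAct τ u = permAct σ u := by
  have hsupp : ∀ i, u i ≠ 0 → i < n ∧ σ i < n := fun i hi =>
    ⟨not_le.1 fun h => hi (hu i h),
      not_le.1 fun h => hi (by simpa [permAct] using hσu (σ i) h)⟩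
  have hfin : {i | u i ≠ 0}.Finite := (Set.finite_Iio n).subset fun i hi => (hsupp i hi).1
  obtain ⟨τ, hτ, hτσ⟩ := exists_isSymUpTo_eqOn σ (S := hfin.toFinset) (by simpa using hsupp)
  exact ⟨τ, hτ, permAct_congr_support fun i hi => hτσ i (by simpa using hi)⟩

lemma symNOrbit_subset_symOrbit {A A' : Set (ℕ → ℝ)} (h : A ⊆ A') :
    symNOrbit n A ⊆ symOrbit A' := by
  rintro _ ⟨σ, hσ, a, ha, rfl⟩
  exact ⟨σ, hσ.isFinitary, a, h ha, rfl⟩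

lemma card_support_le_of_permAct_apply_eq_zero {σ : Equiv.Perm ℕ} {a : ℕ → ℝ}
    (hf : {i | a i ≠ 0}.Finite) (h : ∀ i, n ≤ i → permAct σ a i = 0) :
    hf.toFinset.card ≤ n := by
  simpa using Finset.card_le_card_of_injOn σ (t := Finset.range n)
    (fun i hi => Finset.mem_range.2 <| not_le.1 fun hni =>
      (by simpa using hi : a i ≠ 0) (by simpa [permAct] using h (σ i) hni))
    σ.injective.injOn

lemma mem_symNOrbit_of_mem_symOrbit {A : Set (ℕ → ℝ)}
    (hsupp : ∀ a ∈ A, ∃ hf : {i | a i ≠ 0}.Finite, ∀ i, a i ≠ 0 → i < hf.toFinset.card)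
    {v : ℕ → ℝ} (hv : v ∈ symOrbit A) (hv0 : ∀ i, n ≤ i → v i = 0) :
    v ∈ symNOrbit n {a ∈ A | ∀ i, n ≤ i → a i = 0} := by
  obtain ⟨σ, -, a, haA, rfl⟩ := hv
  obtain ⟨hf, hinit⟩ := hsupp a haA
  have ha0 : ∀ i, n ≤ i → a i = 0 := fun i hi => by_contra fun hai =>
    ((hinit i hai).trans_le (card_support_le_of_permAct_apply_eq_zero hf hv0)).not_ge hi
  obtain ⟨τ, hτ, hτa⟩ := exists_isSymUpTo_permAct_eq ha0 hv0
  exact ⟨τ, hτ, a, ⟨haA, ha0⟩, hτa.symm⟩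

end SymUpTo

theorem local_cones_of_equivariant_cone_general
    (A : Set (ℕ → ℝ))
    (hpos : ∀ a ∈ A, ∀ i, 0 ≤ a i)
    (hsupp : ∀ a ∈ A, ∃ hf : {i | a i ≠ 0}.Finite, ∀ i, a i ≠ 0 → i < hf.toFinset.card)
    (n : ℕ) (u : ℕ → ℝ) :
    (inCone (symOrbit A) u ∧ ∀ i, n ≤ i → u i = 0) ↔
      inCone (symNOrbit n {a ∈ A | ∀ i, n ≤ i → a i = 0}) u := by
  constructor
  · rintro ⟨⟨k, c, b, hc, hb, rfl⟩, hu0⟩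
    have hb_nonneg : ∀ i j, 0 ≤ b i j := fun i j => by
      obtain ⟨σ, -, a, haA, hba⟩ := hb i
      exact hba ▸ hpos a haA _
    exact inCone_sum hc fun i hci => mem_symNOrbit_of_mem_symOrbit hsupp (hb i) fun j hj =>
      apply_eq_zero_of_sum_smul_apply_eq_zero hc (hb_nonneg · j) (hu0 j hj) hci
  · intro hu
    refine ⟨inCone_mono (symNOrbit_subset_symOrbit fun a ha => ha.1) hu,
      fun j hj => hu.apply_eq_zero ?_⟩
    rintro _ ⟨σ, hσ, a, ⟨-, ha0⟩, rfl⟩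
    rw [hσ.permAct_apply_of_le a hj, ha0 j hj]

/-- If `C` is the cone generated by the `Sym(∞)`-orbit of a finite nonnegative set `A`
whose elements are supported on initial segments, then for every `n ≥ 1`,
`C ∩ ℝⁿ` is the cone generated by the `Sym(n)`-orbit of `A ∩ ℝⁿ`. -/
theorem local_cones_of_equivariant_cone
    (A : Set (ℕ → ℝ)) (hAfin : A.Finite)
    (hpos : ∀ a ∈ A, ∀ i, 0 ≤ a i)
    (hsupp : ∀ a ∈ A, ∃ hf : {i | a i ≠ 0}.Finite, ∀ i, a i ≠ 0 → i < hf.toFinset.card)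
    (n : ℕ) (hn : 1 ≤ n) (u : ℕ → ℝ) :
    (inCone (symOrbit A) u ∧ ∀ i, n ≤ i → u i = 0) ↔
      inCone (symNOrbit n {a ∈ A | ∀ i, n ≤ i → a i = 0}) u :=
  local_cones_of_equivariant_cone_general A hpos hsupp n u
end

section
/- Let u₁ = (1,1) and u₂ = (1,−1) in R², and let C ⊆ R^∞ be the cone generated by the orbit Sym(∞)({u₁, u₂}) (viewing R² as sequences supported on the first two coordinates). Then e₁ ∈ C, but e₁ is not a nonnegative scalar multiple of any single element of Sym(∞)({u₁, u₂}). Hence the equivariant Carathéodory bound by support size fails without the nonnegativity assumption on the generators. -/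
/-- With mixed-sign generators `u₁ = (1,1)` and `u₂ = (1,-1)`, the element
`e₁ = ½u₁ + ½u₂` lies in the cone generated by the `Sym(∞)`-orbit of `{u₁, u₂}`, but is
not a nonnegative multiple of a single orbit element: the support-size Carathéodory bound
fails without nonnegativity. -/
theorem caratheodory_fails_without_nonnegativity (u₁ u₂ : ℕ → ℝ)
    (h₁ : u₁ = fun i => if i = 0 then 1 else if i = 1 then 1 else 0)
    (h₂ : u₂ = fun i => if i = 0 then 1 else if i = 1 then -1 else 0) :
    inCone (symOrbit {u₁, u₂}) (Pi.single 0 1 : ℕ → ℝ) ∧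
    ∀ c : ℝ, 0 ≤ c → ∀ v ∈ symOrbit {u₁, u₂}, (Pi.single 0 1 : ℕ → ℝ) ≠ c • v := by
  subst h₁ h₂
  constructor
  · refine ⟨2, ![1/2, 1/2], ![fun i => if i = 0 then 1 else if i = 1 then 1 else 0, fun i => if i = 0 then 1 else if i = 1 then (-1:ℝ) else 0], ?_, ?_, ?_⟩
    · intro i; fin_cases i <;> norm_num
    · intro i
      fin_cases i
      · exact ⟨1, by simp [IsFinitary], _, Or.inl rfl, rfl⟩
      · exact ⟨1, by simp [IsFinitary], _, Or.inr rfl, rfl⟩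
    · funext i
      simp [Fin.sum_univ_two]
      rcases eq_or_ne i 0 with rfl | h0
      · norm_num
      rcases eq_or_ne i 1 with rfl | h1
      · norm_num
      · simp [Pi.single_apply, h0, h1]
  · rintro c hc v ⟨σ, -, u, hu, rfl⟩ heq
    have h0 := congrFun heq (σ 0)
    have h1 := congrFun heq (σ 1)
    have hne : σ 1 ≠ σ 0 := fun h => by simpa using σ.injective h
    rcases hu with rfl | rfl <;>
    · simp [permAct, Pi.single_apply] at h0 h1
      rcases eq_or_ne (σ 0) 0 with h | h
      · rw [if_pos h] at h0
        rw [if_neg (h ▸ hne)] at h1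
        nlinarith
      · rw [if_neg h] at h0
        have hy := congrFun heq 0
        have : σ.symm 0 ≠ 0 := fun hh => h (by simpa using (congrArg σ hh).symm)
        simp [permAct, Pi.single_apply, ← h0, this] at hy
end

section
/- Let a > 1 be an irrational real number, let n ≥ 2, and let C_n ⊆ R^n be the cone generated by the Sym(n)-orbit of the vector (1, a, 0, …, 0). Then the monoid M_n = C_n ∩ Z^n is not finitely generated. -/
/-- Membership in the cone in `ℝⁿ` generated by `B`. -/
def inConeF {n : ℕ} (B : Set (Fin n → ℝ)) (u : Fin n → ℝ) : Prop :=
  ∃ (k : ℕ) (c : Fin k → ℝ) (b : Fin k → Fin n → ℝ),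
    (∀ i, 0 ≤ c i) ∧ (∀ i, b i ∈ B) ∧ u = ∑ i, c i • b i

/-- Membership in the monoid in `ℤⁿ` generated by `B`: nonnegative integer combinations. -/
def inMndF {n : ℕ} (B : Set (Fin n → ℤ)) (u : Fin n → ℤ) : Prop :=
  ∃ (k : ℕ) (c : Fin k → ℕ) (b : Fin k → Fin n → ℤ),
    (∀ i, b i ∈ B) ∧ u = ∑ i, (c i : ℤ) • b i

/-!
For the coordinates `i = 0`, `j = 1`, the linear form `L = facetFunctional a j`,
`L v = a · (∑_{k ≠ j} v k) - v j`, is nonnegative on every permutation of `(1, a, 0, …, 0)`,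
hence on the cone, and by irrationality of `a` it is strictly positive on the nonzero lattice
points of the cone. A finite generating set would thus bound `L` below by some `ε > 0` on all
nonzero elements of the monoid. But the lattice points `(K, ⌊K a⌋, 0, …, 0)`, `K ≥ 1`, lie in the
cone and have `L = fract (K a)`, which Dirichlet's approximation theorem makes smaller than `ε`.
-/

open Finset

section

variable {n : ℕ}

theorem inConeF.map_nonneg {B : Set (Fin n → ℝ)} {u : Fin n → ℝ} (hu : inConeF B u)
    (φ : (Fin n → ℝ) →ₗ[ℝ] ℝ) (hφ : ∀ b ∈ B, 0 ≤ φ b) : 0 ≤ φ u := by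
  obtain ⟨k, c, b, hc, hb, rfl⟩ := hu
  rw [map_sum]
  exact sum_nonneg fun i _ => by
    rw [map_smul, smul_eq_mul]
    exact mul_nonneg (hc i) (hφ _ (hb i))

theorem inMndF_of_mem {S : Set (Fin n → ℤ)} {s : Fin n → ℤ} (hs : s ∈ S) : inMndF S s :=
  ⟨1, fun _ => 1, fun _ => s, fun _ => hs, by simp⟩

theorem exists_pos_le_map_of_inMndF (S : Finset (Fin n → ℤ)) (f : (Fin n → ℤ) →+ ℝ)
    (hf : ∀ s ∈ S, s ≠ 0 → 0 < f s) :
    ∃ ε > 0, ∀ u, inMndF (S : Set (Fin n → ℤ)) u → u ≠ 0 → ε ≤ f u := by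
  classical
  set T := insert 1 ((S.filter (· ≠ 0)).image f)
  have hT : T.Nonempty := insert_nonempty _ _
  refine ⟨T.min' hT, (T.lt_min'_iff hT).2 ?_, ?_⟩
  · simp only [T, mem_insert, mem_image, mem_filter]
    rintro _ (rfl | ⟨s, ⟨hs, hs0⟩, rfl⟩)
    exacts [one_pos, hf s hs hs0]
  · rintro _ ⟨k, c, b, hb, rfl⟩ hu0
    have hfb : ∀ i, 0 ≤ f (b i) := fun i => by
      rcases eq_or_ne (b i) 0 with h | h
      · rw [h, map_zero]
      · exact (hf _ (hb i) h).le
    obtain ⟨i, hci, hbi⟩ : ∃ i, c i ≠ 0 ∧ b i ≠ 0 := by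
      contrapose! hu0
      refine sum_eq_zero fun i _ => ?_
      by_cases hci : c i = 0 <;> simp [hci, hu0]
    calc T.min' hT ≤ f (b i) :=
          T.min'_le _ (mem_insert_of_mem (mem_image_of_mem f (mem_filter.2 ⟨hb i, hbi⟩)))
      _ ≤ c i * f (b i) :=
          le_mul_of_one_le_left (hfb i) (by exact_mod_cast Nat.one_le_iff_ne_zero.2 hci)
      _ ≤ ∑ i, c i * f (b i) :=
          single_le_sum (fun i _ => mul_nonneg (Nat.cast_nonneg _) (hfb i)) (mem_univ i)
      _ = f (∑ i, (c i : ℤ) • b i) := by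
        rw [map_sum]; simp_rw [map_zsmul, zsmul_eq_mul, Int.cast_natCast]

theorem Irrational.exists_pos_fract_mul_lt {a ε : ℝ} (ha : Irrational a) (hε : 0 < ε) :
    ∃ K : ℤ, 0 < K ∧ Int.fract (K * a) < ε := by
  have fract_le {x : ℝ} {m : ℤ} (h : (m : ℝ) ≤ x) : Int.fract x ≤ x - m := by
    rw [Int.fract]
    linarith [(Int.cast_le (R := ℝ)).2 (Int.le_floor.2 h)]
  obtain ⟨N, hN⟩ := exists_nat_one_div_lt hε
  obtain ⟨m, k, hk, -, hkm⟩ := Real.exists_int_int_abs_mul_sub_le a N.succ_pos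
  have hd : |k * a - m| < min ε 1 := by
    refine lt_min (hkm.trans_lt (lt_of_le_of_lt ?_ hN)) (hkm.trans_lt ?_)
    · gcongr; linarith
    · rw [div_lt_one (by positivity)]; push_cast; linarith [(N.cast_nonneg : (0:ℝ) ≤ N)]
  have hne : (k : ℝ) * a - m ≠ 0 := sub_ne_zero.2 ((ha.intCast_mul hk.ne').ne_int m)
  rcases hne.lt_or_gt with hneg | hpos
  · -- `k a` falls short of `m` by `δ`; for `t` with `t δ` just below `1`, the multiple `t k a`
    -- exceeds `t m - 1` by `1 - t δ ≤ δ`.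
    set δ := (m : ℝ) - k * a
    have hδ : δ < min ε 1 := by rw [abs_of_neg hneg] at hd; linarith
    have hδ0 : 0 < δ := by linarith
    set t := ⌈δ⁻¹⌉ - 1
    have ht : (t : ℝ) * δ < 1 := by
      have := Int.ceil_lt_add_one δ⁻¹
      rw [← lt_div_iff₀ hδ0, one_div]; push_cast [t]; linarith
    have ht' : 1 ≤ ((t : ℝ) + 1) * δ := by
      rw [← div_le_iff₀ hδ0, one_div]; push_cast [t]; linarith [Int.le_ceil δ⁻¹]
    have ht1 : 0 < t := by
      have : (1 : ℤ) < ⌈δ⁻¹⌉ :=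
        Int.lt_ceil.2 (by push_cast; exact (one_lt_inv₀ hδ0).2 (by linarith [min_le_right ε 1]))
      omega
    refine ⟨t * k, mul_pos ht1 hk, ?_⟩
    have hM : ((t * m - 1 : ℤ) : ℝ) ≤ (t * k : ℤ) * a := by push_cast; nlinarith
    calc Int.fract (((t * k : ℤ) : ℝ) * a) ≤ (t * k : ℤ) * a - (t * m - 1 : ℤ) := fract_le hM
      _ = 1 - t * δ := by push_cast [δ]; ring
      _ < ε := by nlinarith [min_le_left ε 1]
  · refine ⟨k, hk, (fract_le (by linarith)).trans_lt ?_⟩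
    rw [abs_of_pos hpos] at hd
    linarith [min_le_left ε 1]

def permOrbit (g : Fin n → ℝ) : Set (Fin n → ℝ) :=
  {v | ∃ σ : Equiv.Perm (Fin n), v = fun i => g (σ.symm i)}

def facetFunctional (a : ℝ) (j : Fin n) : (Fin n → ℝ) →ₗ[ℝ] ℝ :=
  a • ∑ k, LinearMap.proj k - (a + 1) • LinearMap.proj j

theorem facetFunctional_apply (a : ℝ) (j : Fin n) (v : Fin n → ℝ) :
    facetFunctional a j v = a * ∑ k, v k - (a + 1) * v j := by
  simp [facetFunctional]

section Orbit

variable {a : ℝ} {i j : Fin n}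

theorem single_add_single_le (ha : 1 ≤ a) (hij : i ≠ j) (k : Fin n) :
    (Pi.single i 1 + Pi.single j a : Fin n → ℝ) k ≤ a := by
  simp only [Pi.add_apply, Pi.single_apply]
  split_ifs with hi hj <;> first | linarith | exact absurd (hi.symm.trans hj) hij

theorem sum_single_add_single :
    ∑ k, (Pi.single i 1 + Pi.single j a : Fin n → ℝ) k = 1 + a := by
  simp [sum_add_distrib]

theorem nonneg_of_mem_permOrbit (ha : 0 ≤ a) {v : Fin n → ℝ}
    (hv : v ∈ permOrbit (Pi.single i 1 + Pi.single j a)) (k : Fin n) : 0 ≤ v k := by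
  obtain ⟨σ, rfl⟩ := hv
  simp only [Pi.add_apply, Pi.single_apply]
  split_ifs <;> linarith

theorem facetFunctional_nonneg_of_mem_permOrbit (ha : 1 ≤ a) (hij : i ≠ j) {v : Fin n → ℝ}
    (hv : v ∈ permOrbit (Pi.single i 1 + Pi.single j a)) : 0 ≤ facetFunctional a j v := by
  obtain ⟨σ, rfl⟩ := hv
  have hsum := sum_single_add_single (a := a) (i := i) (j := j)
  rw [← Equiv.sum_comp σ.symm] at hsum
  rw [facetFunctional_apply, hsum]
  nlinarith [single_add_single_le ha hij (σ.symm j)]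

theorem inConeF_single_add_single (ha : 1 < a) (hij : i ≠ j) {x y : ℝ} (hx : x ≤ a * y)
    (hy : y ≤ a * x) :
    inConeF (permOrbit (Pi.single i 1 + Pi.single j a)) (Pi.single i x + Pi.single j y) := by
  have ha2 : 0 < a ^ 2 - 1 := by nlinarith
  refine ⟨2, ![(a * y - x) / (a ^ 2 - 1), (a * x - y) / (a ^ 2 - 1)],
    ![Pi.single i 1 + Pi.single j a, Pi.single i a + Pi.single j 1], ?_, ?_, ?_⟩
  · intro k
    fin_cases k <;> exact div_nonneg (by simp; linarith) ha2.le
  · intro k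
    fin_cases k
    · exact ⟨1, rfl⟩
    · refine ⟨Equiv.swap i j, funext fun k => ?_⟩
      simp only [Equiv.symm_swap, Pi.add_apply, Pi.single_apply, Equiv.swap_apply_def]
      split_ifs <;> simp_all
  · funext k
    simp only [Fin.sum_univ_two, Matrix.cons_val_zero, Matrix.cons_val_one, Pi.add_apply,
      Pi.smul_apply, smul_eq_mul, Pi.single_apply]
    split_ifs <;> subst_vars <;> first | exact absurd rfl hij | field_simp; ring

theorem facetFunctional_single_add_single (hij : i ≠ j) (x y : ℝ) :
    facetFunctional a j (Pi.single i x + Pi.single j y) = a * x - y := by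
  rw [facetFunctional_apply]
  simp only [sum_add_distrib, sum_pi_single', mem_univ, if_true, Pi.add_apply,
    Pi.single_eq_same, Pi.single_eq_of_ne hij.symm, zero_add]
  ring

theorem inConeF_single_add_single_floor (ha : 1 < a) (hij : i ≠ j) {K : ℤ} (hK : 0 < K) :
    inConeF (permOrbit (Pi.single i 1 + Pi.single j a))
      (Pi.single i (K : ℝ) + Pi.single j (⌊K * a⌋ : ℝ)) := by
  have hK_pos : (0 : ℝ) < K := by exact_mod_cast hK
  have hK_le : (K : ℝ) ≤ ⌊K * a⌋ := by exact_mod_cast Int.le_floor.2 (by nlinarith)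
  refine inConeF_single_add_single ha hij (by nlinarith) ?_
  linarith [Int.floor_le ((K : ℝ) * a)]

end Orbit

theorem facetFunctional_intCast_pos {a : ℝ} (ha : Irrational a) (j : Fin n) {u : Fin n → ℤ}
    (hu : 0 ≤ u) (hu0 : u ≠ 0) (hL : 0 ≤ facetFunctional a j (fun k => (u k : ℝ))) :
    0 < facetFunctional a j (fun k => (u k : ℝ)) := by
  refine hL.lt_of_ne fun h => hu0 ?_
  have hKM : a * ((∑ k, u k - u j : ℤ) : ℝ) = u j := by
    rw [facetFunctional_apply] at h
    push_cast
    linarith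
  have hK : ∑ k, u k - u j = 0 := by
    by_contra hK
    exact (ha.mul_intCast hK).ne_int _ hKM
  have huj : u j = 0 := by
    rw [hK, Int.cast_zero, mul_zero] at hKM
    exact_mod_cast hKM.symm
  funext k
  exact (sum_eq_zero_iff_of_nonneg fun k _ => hu k).1 (by omega) k (mem_univ k)

theorem facetFunctional_pos_of_inConeF {a : ℝ} (ha : 1 < a) (hirr : Irrational a) {i j : Fin n}
    (hij : i ≠ j) {u : Fin n → ℤ}
    (hu : inConeF (permOrbit (Pi.single i 1 + Pi.single j a)) (fun k => (u k : ℝ)))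
    (hu0 : u ≠ 0) : 0 < facetFunctional a j (fun k => (u k : ℝ)) := by
  refine facetFunctional_intCast_pos hirr j (fun k => ?_) hu0 ?_
  · have := hu.map_nonneg (LinearMap.proj k) fun v hv =>
      nonneg_of_mem_permOrbit (by linarith) hv k
    simpa using this
  · exact hu.map_nonneg _ fun v hv => facetFunctional_nonneg_of_mem_permOrbit ha.le hij hv

end

/-- For irrational `a > 1` and `n ≥ 2`, the monoid of lattice points of the cone generated
by the `Sym(n)`-orbit of `(1, a, 0, …, 0)` is not finitely generated. -/
theorem gordan_fails_for_irrational_cone (a : ℝ) (ha : 1 < a) (hirr : Irrational a)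
    (n : ℕ) (hn : 2 ≤ n)
    (g : Fin n → ℝ)
    (hg : ∀ i : Fin n, g i = if (i : ℕ) = 0 then 1 else if (i : ℕ) = 1 then a else 0) :
    ¬ ∃ S : Finset (Fin n → ℤ), ∀ u : Fin n → ℤ,
        inConeF {v | ∃ σ : Equiv.Perm (Fin n), v = fun i => g (σ.symm i)}
            (fun i => (u i : ℝ)) ↔
          inMndF (↑S) u := by
  rintro ⟨S, hS⟩
  set i : Fin n := ⟨0, by omega⟩
  set j : Fin n := ⟨1, hn⟩
  have hij : i ≠ j := by simp [i, j, Fin.ext_iff]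
  obtain rfl : g = Pi.single i 1 + Pi.single j a := by
    funext k
    simp only [hg, Pi.add_apply, Pi.single_apply, i, j, Fin.ext_iff]
    split_ifs <;> first | omega | simp
  let f : (Fin n → ℤ) →+ ℝ :=
    (facetFunctional a j).toAddMonoidHom.comp ((Int.castAddHom ℝ).compLeft (Fin n))
  obtain ⟨ε, hε, hεf⟩ := exists_pos_le_map_of_inMndF S f fun s hs hs0 =>
    facetFunctional_pos_of_inConeF ha hirr hij ((hS s).2 (inMndF_of_mem hs)) hs0
  obtain ⟨K, hK, hKε⟩ := hirr.exists_pos_fract_mul_lt hε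
  set u : Fin n → ℤ := Pi.single i K + Pi.single j ⌊K * a⌋
  have hu_cast : (fun k => (u k : ℝ)) = Pi.single i (K : ℝ) + Pi.single j (⌊K * a⌋ : ℝ) := by
    funext k
    simp only [u, Pi.add_apply, Int.cast_add, Pi.single_apply, apply_ite (Int.cast : ℤ → ℝ),
      Int.cast_zero]
  have hu0 : u ≠ 0 := fun h => by simpa [u, hij, hK.ne'] using congr_fun h i
  have hfu : f u = Int.fract (K * a) := by
    change facetFunctional a j (fun k => (u k : ℝ)) = _
    rw [hu_cast, facetFunctional_single_add_single hij, ← Int.self_sub_floor, mul_comm]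
  have hu := hu_cast ▸ inConeF_single_add_single_floor ha hij hK
  linarith [hεf u ((hS u).1 hu) hu0]
end

section
/- Let a ≥ 1 and n ≥ 2, and let C_n ⊆ R^n be the cone generated by the Sym(n)-orbit of (1, a, 0, …, 0). Then for any u = (u_1,…,u_n) ∈ R^n with u_1 ≤ u_2 ≤ … ≤ u_n: u ∈ C_n if and only if u_1 ≥ 0 and a(u_1 + … + u_{n−1}) ≥ u_n. -/
open Finset

lemma inConeF_iff_mem_hull {n : ℕ} {B : Set (Fin n → ℝ)} {u : Fin n → ℝ} :
    inConeF B u ↔ u ∈ PointedCone.hull ℝ B := by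
  rw [Submodule.mem_span_set']
  constructor
  · rintro ⟨k, c, b, hc, hb, rfl⟩
    exact ⟨k, fun i => ⟨c i, hc i⟩, fun i => ⟨b i, hb i⟩, rfl⟩
  · rintro ⟨k, c, b, rfl⟩
    exact ⟨k, fun i => c i, fun i => b i, fun i => (c i).2, fun i => (b i).2, rfl⟩

lemma PointedCone.nonneg_of_mem_hull {E : Type*} [AddCommGroup E] [Module ℝ E] {B : Set E}
    (φ : E →ₗ[ℝ] ℝ) (hφ : ∀ b ∈ B, 0 ≤ φ b) {u : E} (hu : u ∈ PointedCone.hull ℝ B) :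
    0 ≤ φ u := by
  induction hu using Submodule.span_induction with
  | mem b hb => exact hφ b hb
  | zero => simp
  | add x y _ _ hx hy => rw [map_add]; exact add_nonneg hx hy
  | smul c x _ hx => rw [← Nonneg.coe_smul, map_smul, smul_eq_mul]; exact mul_nonneg c.2 hx

variable {ι : Type*}

section Generators

variable [DecidableEq ι]

def pairGenerators (ι : Type*) [DecidableEq ι] (a : ℝ) : Set (ι → ℝ) :=
  {x | ∃ i k, i ≠ k ∧ x = Pi.single i 1 + Pi.single k a}

lemma setOf_perm_eq_pairGenerators {a : ℝ} {i₀ i₁ : ι} (h : i₀ ≠ i₁) :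
    {v | ∃ σ : Equiv.Perm ι, v = fun i => (Pi.single i₀ 1 + Pi.single i₁ a : ι → ℝ) (σ.symm i)}
      = pairGenerators ι a := by
  ext v
  constructor
  · rintro ⟨σ, rfl⟩
    refine ⟨σ i₀, σ i₁, σ.injective.ne h, ?_⟩
    change (Pi.single i₀ 1 + Pi.single i₁ a : ι → ℝ) ∘ σ.symm = _
    rw [Pi.add_comp, Pi.single_comp_equiv, Pi.single_comp_equiv, Equiv.symm_symm]
  · rintro ⟨i, k, hik, rfl⟩
    obtain ⟨σ, hσ₀, hσ₁⟩ := MulAction.is_two_pretransitive_iff.1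
      (Equiv.Perm.isMultiplyPretransitive ι 2) h hik
    refine ⟨σ, ?_⟩
    change _ = (Pi.single i₀ 1 + Pi.single i₁ a : ι → ℝ) ∘ σ.symm
    rw [Pi.add_comp, Pi.single_comp_equiv, Pi.single_comp_equiv, Equiv.symm_symm,
      ← Equiv.Perm.smul_def, ← Equiv.Perm.smul_def, hσ₀, hσ₁]

end Generators

variable [Fintype ι]

def cappedSimplex (ι : Type*) [Fintype ι] (a : ℝ) : Set (ι → ℝ) :=
  Set.Icc 0 (fun _ => a) ∩ {x | ∑ i, x i = 1 + a}

lemma isCompact_cappedSimplex (a : ℝ) : IsCompact (cappedSimplex ι a) :=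
  isCompact_Icc.inter_right (isClosed_eq (by fun_prop) continuous_const)

lemma convex_cappedSimplex (a : ℝ) : Convex ℝ (cappedSimplex ι a) :=
  (convex_Icc _ _).inter <| convex_hyperplane
    ⟨fun _ _ => Finset.sum_add_distrib, fun _ _ => (Finset.mul_sum ..).symm⟩ _

lemma mem_hull_cappedSimplex_iff {a : ℝ} (ha : 0 < 1 + a) {u : ι → ℝ} :
    u ∈ PointedCone.hull ℝ (cappedSimplex ι a) ↔
      0 ≤ u ∧ ∀ k, (1 + a) * u k ≤ a * ∑ i, u i := by
  constructor
  · intro hu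
    refine ⟨fun i => PointedCone.nonneg_of_mem_hull (LinearMap.proj i) (fun x hx => hx.1.1 i) hu,
      fun k => ?_⟩
    have := PointedCone.nonneg_of_mem_hull
      (a • ∑ i, LinearMap.proj (R := ℝ) (φ := fun _ : ι => ℝ) i - (1 + a) • LinearMap.proj k)
      (fun x hx => ?_) hu
    · simpa [Finset.sum_apply] using this
    · obtain ⟨⟨-, hle⟩, hsum⟩ := hx
      change ∑ i, x i = 1 + a at hsum
      simp only [LinearMap.sub_apply, LinearMap.smul_apply, LinearMap.coe_sum, LinearMap.coe_proj,
        Finset.sum_apply, Function.eval, hsum, smul_eq_mul, sub_nonneg]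
      nlinarith [hle k]
  · rintro ⟨hu, hmax⟩
    rcases (Finset.sum_nonneg fun i _ => hu i).eq_or_lt with hS | hS
    · have : u = 0 := funext fun i =>
        (Finset.sum_eq_zero_iff_of_nonneg (fun i _ => hu i)).1 hS.symm i (mem_univ i)
      rw [this]
      exact zero_mem _
    · have hx : ((1 + a) / ∑ i, u i) • u ∈ cappedSimplex ι a := by
        refine ⟨⟨fun i => ?_, fun i => ?_⟩, ?_⟩
        · exact mul_nonneg (div_nonneg ha.le hS.le) (hu i)
        · change (1 + a) / _ * u i ≤ a
          rw [div_mul_eq_mul_div, div_le_iff₀ hS]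
          exact hmax i
        · change ∑ i, (1 + a) / _ * u i = 1 + a
          rw [← Finset.mul_sum, div_mul_cancel₀ _ hS.ne']
      have hu : u = ((∑ i, u i) / (1 + a)) • ((1 + a) / ∑ i, u i) • u := by
        rw [smul_smul, div_mul_div_cancel₀ ha.ne', div_self hS.ne', one_smul]
      rw [hu]
      exact PointedCone.smul_mem _ (div_nonneg hS.le ha.le) (PointedCone.subset_hull hx)

variable [DecidableEq ι]

lemma add_single_sub_single_mem_cappedSimplex {a s : ℝ} {x : ι → ℝ} (hx : x ∈ cappedSimplex ι a)
    {i j : ι} (hij : i ≠ j) (hi : x i + s ∈ Set.Icc 0 a) (hj : x j - s ∈ Set.Icc 0 a) :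
    x + Pi.single i s - Pi.single j s ∈ cappedSimplex ι a := by
  obtain ⟨⟨h0, ha⟩, hsum⟩ := hx
  have hcoord : ∀ k, (x + Pi.single i s - Pi.single j s : ι → ℝ) k ∈ Set.Icc 0 a := by
    intro k
    rcases eq_or_ne k i with rfl | hki
    · simpa [hij] using hi
    rcases eq_or_ne k j with rfl | hkj
    · simpa [hki] using hj
    simpa [hki, hkj] using ⟨h0 k, ha k⟩
  refine ⟨⟨fun k => (hcoord k).1, fun k => (hcoord k).2⟩, ?_⟩
  change ∑ k, (x + Pi.single i s - Pi.single j s : ι → ℝ) k = 1 + a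
  simp only [Pi.add_apply, Pi.sub_apply, Finset.sum_sub_distrib, Finset.sum_add_distrib,
    Finset.sum_pi_single', mem_univ, if_true]
  linarith [hsum.out]

lemma eq_of_mem_Ioo_of_mem_extremePoints_cappedSimplex {a : ℝ} {x : ι → ℝ}
    (hx : x ∈ (cappedSimplex ι a).extremePoints ℝ) {i j : ι}
    (hi : x i ∈ Set.Ioo 0 a) (hj : x j ∈ Set.Ioo 0 a) : i = j := by
  by_contra hij
  set ε := min (min (x i) (a - x i)) (min (x j) (a - x j))
  have hε0 : 0 < ε := lt_min (lt_min hi.1 (sub_pos.2 hi.2)) (lt_min hj.1 (sub_pos.2 hj.2))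
  have hεi : ε ≤ x i ∧ ε ≤ a - x i :=
    ⟨(min_le_left _ _).trans (min_le_left _ _), (min_le_left _ _).trans (min_le_right _ _)⟩
  have hεj : ε ≤ x j ∧ ε ≤ a - x j :=
    ⟨(min_le_right _ _).trans (min_le_left _ _), (min_le_right _ _).trans (min_le_right _ _)⟩
  have hplus := add_single_sub_single_mem_cappedSimplex hx.1 hij (s := ε)
    ⟨by linarith, by linarith⟩ ⟨by linarith, by linarith⟩
  have hminus := add_single_sub_single_mem_cappedSimplex hx.1 hij (s := -ε)
    ⟨by linarith, by linarith⟩ ⟨by linarith, by linarith⟩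
  have hmid : x ∈ openSegment ℝ (x + Pi.single i ε - Pi.single j ε)
      (x + Pi.single i (-ε) - Pi.single j (-ε)) := by
    refine ⟨1 / 2, 1 / 2, by norm_num, by norm_num, by norm_num, ?_⟩
    ext k
    simp only [Pi.add_apply, Pi.sub_apply, Pi.smul_apply, smul_eq_mul, Pi.single_neg,
      Pi.neg_apply]
    ring
  have := congrFun (hx.2 hplus hminus hmid) i
  simp only [Pi.sub_apply, Pi.add_apply, Pi.single_eq_same, Pi.single_eq_of_ne hij, sub_zero,
    add_eq_left] at this
  exact hε0.ne' this

lemma mem_pairGenerators_of_mem_extremePoints {a : ℝ} (ha : 1 ≤ a) {x : ι → ℝ}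
    (hx : x ∈ (cappedSimplex ι a).extremePoints ℝ) : x ∈ pairGenerators ι a := by
  obtain ⟨⟨h0, hle⟩, hsum⟩ := hx.1
  change ∑ i, x i = 1 + a at hsum
  have hfrac {i j : ι} := eq_of_mem_Ioo_of_mem_extremePoints_cappedSimplex hx (i := i) (j := j)
  have hpos {i} (hi : x i ≠ 0) : 0 < x i := (h0 i).lt_of_ne' hi
  obtain ⟨k, hk⟩ : ∃ k, x k = a := by
    by_contra! hne
    have hlt i : x i < a := (hle i).lt_of_ne (hne i)
    obtain ⟨j, -, hj⟩ := Finset.exists_ne_zero_of_sum_ne_zero (s := univ) (f := x)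
      (by linarith)
    have : ∑ i, x i = x j := Finset.sum_eq_single j
      (fun i _ hij => by_contra fun hi => hij (hfrac ⟨hpos hi, hlt i⟩ ⟨hpos hj, hlt j⟩))
      (by simp)
    linarith [hlt j]
  have hrest : ∑ i ∈ univ.erase k, x i = 1 := by
    linarith [Finset.add_sum_erase univ x (mem_univ k)]
  obtain ⟨i, hik, hi⟩ := Finset.exists_ne_zero_of_sum_ne_zero (s := univ.erase k) (f := x)
    (by rw [hrest]; exact one_ne_zero)
  have hzero : ∀ j ∈ univ.erase k, j ≠ i → x j = 0 := by
    intro j hjk hji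
    by_contra hj
    have hpair : x i + x j ≤ 1 := by
      rw [← hrest, ← Finset.sum_pair hji.symm]
      exact Finset.sum_le_sum_of_subset_of_nonneg (by simp [Finset.insert_subset_iff, hik, hjk])
        (fun l _ _ => h0 l)
    exact hji (hfrac ⟨hpos hj, by linarith [hpos hi]⟩ ⟨hpos hi, by linarith [hpos hj]⟩)
  have hi1 : x i = 1 := by
    rw [← hrest, Finset.sum_eq_single_of_mem i hik hzero]
  refine ⟨i, k, (mem_erase.1 hik).1, funext fun j => ?_⟩
  rcases eq_or_ne j k with rfl | hjk
  · simp [hk, (mem_erase.1 hik).1.symm]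
  rcases eq_or_ne j i with rfl | hji
  · simp [hi1, hjk]
  simp [hji, hjk, hzero j (mem_erase.2 ⟨hjk, mem_univ j⟩) hji]

lemma pairGenerators_finite (a : ℝ) : (pairGenerators ι a).Finite :=
  (Set.finite_range fun p : ι × ι => Pi.single p.1 1 + Pi.single p.2 a).subset
    (by rintro _ ⟨i, k, -, rfl⟩; exact ⟨(i, k), rfl⟩)

lemma pairGenerators_subset_cappedSimplex {a : ℝ} (ha : 1 ≤ a) :
    pairGenerators ι a ⊆ cappedSimplex ι a := by
  rintro _ ⟨i, k, hik, rfl⟩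
  have hcoord j : (Pi.single i 1 + Pi.single k a : ι → ℝ) j ∈ Set.Icc 0 a := by
    rcases eq_or_ne j k with rfl | hjk
    · simp only [Pi.add_apply, Pi.single_eq_of_ne' hik, Pi.single_eq_same, zero_add,
        Set.mem_Icc, le_refl, and_true]
      linarith
    rcases eq_or_ne j i with rfl | hji
    · simpa [hjk] using ha
    simp only [Pi.add_apply, Pi.single_eq_of_ne hji, Pi.single_eq_of_ne hjk, add_zero,
      Set.mem_Icc, le_refl, true_and]
    linarith
  refine ⟨⟨fun j => (hcoord j).1, fun j => (hcoord j).2⟩, ?_⟩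
  change ∑ j, (Pi.single i 1 + Pi.single k a : ι → ℝ) j = 1 + a
  simp [Finset.sum_add_distrib]

lemma cappedSimplex_subset_convexHull_pairGenerators {a : ℝ} (ha : 1 ≤ a) :
    cappedSimplex ι a ⊆ convexHull ℝ (pairGenerators ι a) := by
  rw [← closure_convexHull_extremePoints (isCompact_cappedSimplex a) (convex_cappedSimplex a)]
  exact closure_minimal
    (convexHull_mono fun x hx => mem_pairGenerators_of_mem_extremePoints ha hx)
    ((pairGenerators_finite a).isClosed_convexHull ℝ)

lemma hull_pairGenerators {a : ℝ} (ha : 1 ≤ a) :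
    PointedCone.hull ℝ (pairGenerators ι a) = PointedCone.hull ℝ (cappedSimplex ι a) :=
  le_antisymm (Submodule.span_mono (pairGenerators_subset_cappedSimplex ha)) <|
    Submodule.span_le.2 <| (cappedSimplex_subset_convexHull_pairGenerators ha).trans <|
      convexHull_min PointedCone.subset_hull (PointedCone.convex _)

/-- For `a ≥ 1` and `n ≥ 2`, a vector `u` with non-decreasing coordinates lies in the cone
generated by the `Sym(n)`-orbit of `(1, a, 0, …, 0)` iff `u₁ ≥ 0` and
`a(u₁ + ⋯ + u_{n-1}) ≥ u_n`. -/
theorem membership_in_orbit_cone (a : ℝ) (ha : 1 ≤ a) (n : ℕ) (hn : 2 ≤ n)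
    (g : Fin n → ℝ)
    (hg : ∀ i : Fin n, g i = if (i : ℕ) = 0 then 1 else if (i : ℕ) = 1 then a else 0)
    (u : Fin n → ℝ) (hmono : Monotone u) :
    inConeF {v | ∃ σ : Equiv.Perm (Fin n), v = fun i => g (σ.symm i)} u ↔
      (0 ≤ u ⟨0, by omega⟩ ∧
        u ⟨n - 1, by omega⟩ ≤
          a * ∑ i ∈ Finset.univ.filter (fun i : Fin n => (i : ℕ) < n - 1), u i) := by
  set first : Fin n := ⟨0, by omega⟩
  set last : Fin n := ⟨n - 1, by omega⟩
  have hg' : g = Pi.single first 1 + Pi.single ⟨1, by omega⟩ a := by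
    funext i
    rw [hg]
    rcases i with ⟨_ | _ | i, hi⟩ <;> simp [first, Fin.ext_iff]
  have hfilter : univ.filter (fun i : Fin n => (i : ℕ) < n - 1) = univ.erase last := by
    ext i
    simp only [mem_filter, mem_univ, true_and, mem_erase, ne_eq, Fin.ext_iff, and_true, last]
    omega
  subst hg'
  rw [inConeF_iff_mem_hull, setOf_perm_eq_pairGenerators (by simp [first, Fin.ext_iff]),
    hull_pairGenerators ha, mem_hull_cappedSimplex_iff (by linarith), hfilter,
    ← add_sum_erase univ u (mem_univ last)]
  constructor
  · rintro ⟨hu, hmax⟩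
    exact ⟨hu first, by linarith [hmax last]⟩
  · rintro ⟨hfirst, hlast⟩
    refine ⟨fun i => hfirst.trans (hmono (Nat.zero_le _)), fun k => ?_⟩
    have hk : u k ≤ u last := hmono (Nat.le_sub_one_of_lt k.2)
    linarith [mul_le_mul_of_nonneg_left hk (by linarith : (0 : ℝ) ≤ 1 + a)]
end
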